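/- arXiv:2110.01508 — 4 statements merged into one kernel-verified Lean document; each statement's English description precedes it below -/
import Mathlib

section
/- Let Γ be a branching graph. Every nonempty saturated primitive coideal of Γ is of the form Γ_τ = ∪_{n≥1} {λ ∈ Γ : λ ≤ λ_n} for some infinite path τ = (∅ ↗ λ₁ ↗ λ₂ ↗ ⋯) starting at the root ∅. -/
/-!
Common definitions: graded graphs, ideals and coideals, harmonic functions and the
cone `K⁺`, finite / semifinite / indecomposable harmonic functions.
-/

open scoped ENNReal NNReal

namespace Zigzag

/-- A graded graph: vertices partitioned into finite levels, oriented edges going up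
one level, every vertex having at least one outgoing edge. -/
structure GradedGraph where
  V : Type
  rank : V → ℕ
  adj : V → V → Prop
  rank_adj : ∀ ⦃x y⦄, adj x y → rank y = rank x + 1
  finLevels : ∀ n : ℕ, {x : V | rank x = n}.Finite
  outEdge : ∀ x : V, ∃ y, adj x y

namespace GradedGraph

variable (G : GradedGraph)

/-- `x ≤ y`: `y` is reachable from `x` by a directed path (possibly trivial). -/
def le (x y : G.V) : Prop := Relation.ReflTransGen G.adj x y

/-- The finset of upper neighbours of a vertex. -/
noncomputable def upFinset (x : G.V) : Finset G.V :=
  ((G.finLevels (G.rank x + 1)).subset fun _ hy => G.rank_adj hy).toFinset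

/-- A coideal: closed under going down. -/
def IsCoideal (J : Set G.V) : Prop := ∀ a ∈ J, ∀ b, G.le b a → b ∈ J

/-- A saturated coideal: a coideal in which every vertex has an upper neighbour. -/
def IsSatCoideal (J : Set G.V) : Prop :=
  G.IsCoideal J ∧ ∀ a ∈ J, ∃ b ∈ J, G.adj a b

/-- A primitive saturated coideal: a saturated coideal which is not the union of two
strictly smaller saturated coideals. -/
def IsPrimCoideal (J : Set G.V) : Prop :=
  G.IsSatCoideal J ∧ ∀ J₁ J₂ : Set G.V, G.IsSatCoideal J₁ → G.IsSatCoideal J₂ →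
    J = J₁ ∪ J₂ → J = J₁ ∨ J = J₂

/-- An ideal: closed under going up. -/
def IsIdeal (I : Set G.V) : Prop := ∀ a ∈ I, ∀ b, G.le a b → b ∈ I

/-- A `[0,∞]`-valued function on the vertices is harmonic if its value at any vertex
equals the sum of its values at the upper neighbours. -/
def Harmonic (φ : G.V → ℝ≥0∞) : Prop := ∀ x, φ x = ∑ y ∈ G.upFinset x, φ y

/-- The relation `λ = ∑_{μ : λ ↗ μ} μ` as an element of the free module. -/
noncomputable def relOf (x : G.V) : G.V →₀ ℝ :=
  Finsupp.single x 1 - ∑ y ∈ G.upFinset x, Finsupp.single y 1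

/-- The submodule of relations defining `K(Γ)`. -/
noncomputable def Krel : Submodule ℝ (G.V →₀ ℝ) :=
  Submodule.span ℝ (Set.range G.relOf)

/-- The class of `f` in `K(Γ)`. -/
noncomputable def kmk (f : G.V →₀ ℝ) : (G.V →₀ ℝ) ⧸ G.Krel :=
  Submodule.Quotient.mk f

/-- The cone `K⁺(Γ)` spanned by the vertices in `K(Γ)`. -/
noncomputable def Kpos : Set ((G.V →₀ ℝ) ⧸ G.Krel) :=
  G.kmk '' {f | ∀ x, 0 ≤ f x}

/-- The order defined by the cone: `x ≤_K y` iff `y − x ∈ K⁺(Γ)`. -/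
def leK (x y : (G.V →₀ ℝ) ⧸ G.Krel) : Prop := y - x ∈ G.Kpos

/-- The value of (the canonical extension of) `φ` at a nonnegative combination of
vertices. -/
noncomputable def phiHat (φ : G.V → ℝ≥0∞) (f : G.V →₀ ℝ) : ℝ≥0∞ :=
  ∑ x ∈ f.support, ENNReal.ofReal (f x) * φ x

/-- `φ` is everywhere finite. -/
def FiniteH (φ : G.V → ℝ≥0∞) : Prop := ∀ x, φ x ≠ ⊤

/-- `φ` is semifinite: not everywhere finite, and its value at any element of the cone
`K⁺(Γ)` is the supremum of its values at the `≤_K`-smaller elements of the cone where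
it is finite. -/
def Semifinite (φ : G.V → ℝ≥0∞) : Prop :=
  (∃ x, φ x = ⊤) ∧
  ∀ f : G.V →₀ ℝ, (∀ x, 0 ≤ f x) →
    G.phiHat φ f =
      ⨆ g ∈ {g : G.V →₀ ℝ |
        (∀ x, 0 ≤ g x) ∧ G.leK (G.kmk g) (G.kmk f) ∧ G.phiHat φ g ≠ ⊤},
        G.phiHat φ g

/-- A semifinite harmonic function `φ` is indecomposable if any finite or semifinite
harmonic function `φ′ ≤ φ` which does not vanish identically on the finiteness ideal
of `φ` is a constant multiple of `φ` on that ideal. -/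
def IndecSemifinite (φ : G.V → ℝ≥0∞) : Prop :=
  ∀ φ' : G.V → ℝ≥0∞, G.Harmonic φ' →
    (G.FiniteH φ' ∨ G.Semifinite φ') →
    (∀ x, φ' x ≤ φ x) →
    (∃ x, φ x ≠ ⊤ ∧ φ' x ≠ 0) →
    ∃ c : ℝ≥0, ∀ x, φ x ≠ ⊤ → φ' x = (c : ℝ≥0∞) * φ x

/-- A finite harmonic function `φ` is indecomposable if any harmonic function
`φ′ ≤ φ` which is not identically zero is a constant multiple of `φ`. -/
def IndecFinite (φ : G.V → ℝ≥0∞) : Prop :=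
  ∀ φ' : G.V → ℝ≥0∞, G.Harmonic φ' →
    (∀ x, φ' x ≤ φ x) → (∃ x, φ' x ≠ 0) →
    ∃ c : ℝ≥0, ∀ x, φ' x = (c : ℝ≥0∞) * φ x

/-- The number of directed paths from `x` to `y` (the shifted dimension
`dim(x, y)`). -/
noncomputable def gdim (x y : G.V) : ℕ :=
  Nat.card {p : List G.V // p.Chain' G.adj ∧ p.head? = some x ∧ p.getLast? = some y}

end GradedGraph

end Zigzag

/-!
Primitivity makes `J` directed: for `l ∈ J`, split `J` into the saturated coideals generated
by `{ν ∈ J | l ≤ ν}` and by the rest of `J`; the second one cannot be all of `J` as it misses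
`l`, so the first one is. Since levels are finite, directedness gives for every level a single
vertex of `J` dominating `J` on that level, hence a strictly increasing chain in `J`,
starting at the root, that is cofinal in `J`. Walking up from each chain vertex to the next
one gives the required infinite path.
-/

lemma Nat.exists_eq_and_succ_eq_of_lt {f : ℕ → ℕ} {k : ℕ} (h0 : f 0 ≤ k)
    (hstep : ∀ n, f (n + 1) ≤ f n + 1) (hk : ∃ n, k < f n) :
    ∃ n, f n = k ∧ f (n + 1) = k + 1 := by
  obtain ⟨n, hn⟩ : ∃ n, Nat.find hk = n + 1 :=
    Nat.exists_eq_add_one.mpr (Nat.pos_of_ne_zero fun h => by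
      have := h ▸ Nat.find_spec hk; omega)
  have hlt : k < f (n + 1) := hn ▸ Nat.find_spec hk
  have hle : f n ≤ k := not_lt.mp (Nat.find_min hk (by omega))
  have := hstep n
  exact ⟨n, by omega, by omega⟩

namespace Zigzag

namespace GradedGraph

variable {G : GradedGraph}

instance : IsTrans G.V G.le := ⟨fun _ _ _ => Relation.ReflTransGen.trans⟩

lemma rank_le_of_le {x y : G.V} (h : G.le x y) : G.rank x ≤ G.rank y := by
  induction h with
  | refl => exact le_rfl
  | tail _ hadj ih => rw [G.rank_adj hadj]; omega

lemma exists_adj_of_le_of_ne {x y : G.V} (h : G.le x y) (hne : x ≠ y) :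
    ∃ z, G.adj x z ∧ G.le z y := by
  rcases Relation.ReflTransGen.cases_head h with h | h
  · exact absurd h hne
  · exact h

lemma ne_of_le_of_adj {x y z : G.V} (hxy : G.le x y) (hyz : G.adj y z) : x ≠ z := by
  rintro rfl
  have := G.rank_adj hyz
  have := rank_le_of_le hxy
  omega

lemma root_le {root : G.V} (hroot : ∀ x, G.rank x = 0 ↔ x = root)
    (hbranch : ∀ x, 0 < G.rank x → ∃ y, G.adj y x) (x : G.V) : G.le root x := by
  induction hx : G.rank x generalizing x with
  | zero => rw [(hroot x).mp hx]; exact Relation.ReflTransGen.refl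
  | succ n ih =>
    obtain ⟨y, hy⟩ := hbranch x (by omega)
    exact (ih y (by rw [G.rank_adj hy] at hx; omega)).tail hy

variable (G) in
def downClosure (S : Set G.V) : Set G.V := {x | ∃ s ∈ S, G.le x s}

lemma subset_downClosure (S : Set G.V) : S ⊆ G.downClosure S :=
  fun s hs => ⟨s, hs, Relation.ReflTransGen.refl⟩

lemma IsCoideal.downClosure_subset {J S : Set G.V} (hJ : G.IsCoideal J) (hS : S ⊆ J) :
    G.downClosure S ⊆ J :=
  fun _ ⟨s, hs, hxs⟩ => hJ s (hS hs) _ hxs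

lemma isSatCoideal_downClosure {S : Set G.V} (hS : ∀ a ∈ S, ∃ b ∈ S, G.adj a b) :
    G.IsSatCoideal (G.downClosure S) := by
  refine ⟨fun a ⟨s, hs, has⟩ b hba => ⟨s, hs, hba.trans has⟩, ?_⟩
  rintro a ⟨s, hs, has⟩
  by_cases h : a = s
  · obtain ⟨b, hb, hab⟩ := hS s hs
    exact ⟨b, subset_downClosure S hb, h ▸ hab⟩
  · obtain ⟨z, haz, hzs⟩ := exists_adj_of_le_of_ne has h
    exact ⟨z, ⟨s, hs, hzs⟩, haz⟩

lemma IsPrimCoideal.directedOn {J : Set G.V} (hJ : G.IsPrimCoideal J) : DirectedOn G.le J := by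
  obtain ⟨⟨hco, hsat⟩, hprim⟩ := hJ
  intro l hl m hm
  set A := G.downClosure {ν ∈ J | G.le l ν}
  have hA : G.IsSatCoideal A := isSatCoideal_downClosure fun ν ⟨hν, hlν⟩ => by
    obtain ⟨b, hb, hνb⟩ := hsat ν hν
    exact ⟨b, ⟨hb, hlν.tail hνb⟩, hνb⟩
  have hB : G.IsSatCoideal (G.downClosure (J \ A)) := isSatCoideal_downClosure
    fun x ⟨hx, hxA⟩ => by
      obtain ⟨b, hb, hxb⟩ := hsat x hx
      exact ⟨b, ⟨hb, fun hbA => hxA (hA.1 b hbA x (.single hxb))⟩, hxb⟩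
  have hAJ : A ⊆ J := hco.downClosure_subset fun _ h => h.1
  have hJAB : J = A ∪ G.downClosure (J \ A) := by
    refine Set.Subset.antisymm (fun x hx => ?_)
      (Set.union_subset hAJ (hco.downClosure_subset Set.sdiff_subset))
    by_cases hxA : x ∈ A
    · exact Or.inl hxA
    · exact Or.inr (subset_downClosure _ ⟨hx, hxA⟩)
  rcases hprim _ _ hA hB hJAB with hJA | hJB
  · obtain ⟨ν, ⟨hν, hlν⟩, hmν⟩ := hJA ▸ hm
    exact ⟨ν, hν, hlν, hmν⟩
  · obtain ⟨x, ⟨hx, hxA⟩, hlx⟩ := hJB ▸ hl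
    exact absurd ⟨x, ⟨hx, hlx⟩, Relation.ReflTransGen.refl⟩ hxA

lemma exists_forall_le_of_finite {J s : Set G.V} (hdir : DirectedOn G.le J) (hJ : J.Nonempty)
    (hs : s.Finite) (hsJ : s ⊆ J) : ∃ ν ∈ J, ∀ x ∈ s, G.le x ν := by
  have : Nonempty J := hJ.to_subtype
  obtain ⟨ν, hν⟩ := hdir.directed_val.finset_le (hs.preimage Subtype.val_injective.injOn).toFinset
  exact ⟨ν, ν.2, fun x hx => hν ⟨x, hsJ hx⟩ (by simpa using hx)⟩

lemma exists_chain_le {J : Set G.V} (hsat : ∀ a ∈ J, ∃ b ∈ J, G.adj a b)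
    (hdir : DirectedOn G.le J) {x₀ : G.V} (hx₀ : x₀ ∈ J) (μ : ℕ → G.V) (hμ : ∀ k, μ k ∈ J) :
    ∃ c : ℕ → G.V, c 0 = x₀ ∧ (∀ k, c k ∈ J) ∧ (∀ k, G.le (c k) (c (k + 1))) ∧
      (∀ k, c k ≠ c (k + 1)) ∧ ∀ k, G.le (μ k) (c (k + 1)) := by
  have step : ∀ k, ∀ v ∈ J, ∃ w ∈ J, G.le v w ∧ v ≠ w ∧ G.le (μ k) w := by
    intro k v hv
    obtain ⟨ν, hν, hvν, hμν⟩ := hdir v hv (μ k) (hμ k)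
    obtain ⟨w, hw, hνw⟩ := hsat ν hν
    exact ⟨w, hw, hvν.tail hνw, ne_of_le_of_adj hvν hνw, hμν.tail hνw⟩
  choose! next hnextJ hle hne hμle using step
  let c : ℕ → G.V := fun n => Nat.rec x₀ next n
  have hcJ : ∀ k, c k ∈ J := fun k => by
    induction k with
    | zero => exact hx₀
    | succ k ih => exact hnextJ k _ ih
  exact ⟨c, rfl, hcJ, fun k => hle k _ (hcJ k), fun k => hne k _ (hcJ k),
    fun k => hμle k _ (hcJ k)⟩

lemma exists_path_through_chain {c : ℕ → G.V} (hc : ∀ k, G.le (c k) (c (k + 1)))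
    (hne : ∀ k, c k ≠ c (k + 1)) :
    ∃ τ : ℕ → G.V, τ 0 = c 0 ∧ (∀ n, G.adj (τ n) (τ (n + 1))) ∧ (∀ k, ∃ n, τ n = c k) ∧
      ∀ n, ∃ k, G.le (τ n) (c k) := by
  -- state `(v, k)`: the walk is at `v` and heads for `c k`
  have step : ∀ s : G.V × ℕ, G.le s.1 (c s.2) → ∃ t : G.V × ℕ, G.adj s.1 t.1 ∧
      G.le t.1 (c t.2) ∧ (t.2 = s.2 ∨ s.1 = c s.2 ∧ t.2 = s.2 + 1) := by
    rintro ⟨v, k⟩ hv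
    by_cases hvk : v = c k
    · obtain ⟨w, hvw, hw⟩ := exists_adj_of_le_of_ne (hvk ▸ hc k) (hvk ▸ hne k)
      exact ⟨(w, k + 1), hvw, hw, Or.inr ⟨hvk, rfl⟩⟩
    · obtain ⟨w, hvw, hw⟩ := exists_adj_of_le_of_ne hv hvk
      exact ⟨(w, k), hvw, hw, Or.inl rfl⟩
  choose! next hadj hle hidx using step
  set s : ℕ → G.V × ℕ := fun n => next^[n] (c 0, 0)
  have hs_succ : ∀ n, s (n + 1) = next (s n) := fun n => Function.iterate_succ_apply' ..
  have hs : ∀ n, G.le (s n).1 (c (s n).2) := fun n => by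
    induction n with
    | zero => exact Relation.ReflTransGen.refl
    | succ n ih => exact hs_succ n ▸ hle _ ih
  have hτadj : ∀ n, G.adj (s n).1 (s (n + 1)).1 := fun n => hs_succ n ▸ hadj _ (hs n)
  have hrank : ∀ n, G.rank (s n).1 = G.rank (c 0) + n := fun n => by
    induction n with
    | zero => rfl
    | succ n ih => rw [G.rank_adj (hτadj n), ih]; rfl
  -- the walk climbs one level per step, so it cannot stay below a fixed `c j`
  have hunbounded : ∀ j, ∃ n, j < (s n).2 := by
    intro j
    by_contra! h
    have hmono : Monotone (G.rank ∘ c) := monotone_nat_of_le_succ fun k => rank_le_of_le (hc k)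
    have := (rank_le_of_le (hs (G.rank (c j) + 1))).trans (hmono (h _))
    simp only [hrank, Function.comp_apply] at this
    omega
  have hidx_succ : ∀ n, (s (n + 1)).2 ≤ (s n).2 + 1 := fun n => by
    rcases hs_succ n ▸ hidx _ (hs n) with h | ⟨-, h⟩ <;> omega
  refine ⟨fun n => (s n).1, rfl, hτadj, fun k => ?_, fun n => ⟨_, hs n⟩⟩
  obtain ⟨n, hnk, hnk'⟩ :=
    Nat.exists_eq_and_succ_eq_of_lt (Nat.zero_le k) hidx_succ (hunbounded k)
  rcases hs_succ n ▸ hidx _ (hs n) with h | ⟨hvc, -⟩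
  · omega
  · exact ⟨n, hnk ▸ hvc⟩

end GradedGraph

/-- In a branching graph (level `0` is a singleton `{∅}` and every
vertex of positive level has an incoming edge), every nonempty saturated primitive
coideal is of the form `Γ_τ = ∪_n {λ : λ ≤ λ_n}` for an infinite path
`τ = (∅ ↗ λ₁ ↗ λ₂ ↗ ⋯)` starting at the root. -/
theorem primitive_coideal_eq_path_coideal (G : GradedGraph) (root : G.V)
    (hroot : ∀ x, G.rank x = 0 ↔ x = root)
    (hbranch : ∀ x, 0 < G.rank x → ∃ y, G.adj y x)
    (J : Set G.V) (hJ : G.IsPrimCoideal J) (hne : J.Nonempty) :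
    ∃ τ : ℕ → G.V, τ 0 = root ∧ (∀ n, G.adj (τ n) (τ (n + 1))) ∧
      J = {x | ∃ n, G.le x (τ n)} := by
  have hdir := hJ.directedOn
  obtain ⟨⟨hco, hsat⟩, -⟩ := hJ
  have hrootJ : root ∈ J :=
    hne.elim fun a ha => hco a ha root (GradedGraph.root_le hroot hbranch a)
  have hlevel (k : ℕ) : ∃ ν ∈ J, ∀ x ∈ {x | G.rank x = k} ∩ J, G.le x ν :=
    GradedGraph.exists_forall_le_of_finite hdir hne ((G.finLevels k).inter_of_left J)
      Set.inter_subset_right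
  choose μ hμJ hμ using hlevel
  obtain ⟨c, hc0, hcJ, hc, hcne, hμc⟩ := GradedGraph.exists_chain_le hsat hdir hrootJ μ hμJ
  obtain ⟨τ, hτ0, hτ, hτc, hcτ⟩ := GradedGraph.exists_path_through_chain hc hcne
  refine ⟨τ, hτ0.trans hc0, hτ, Set.Subset.antisymm (fun x hx => ?_) ?_⟩
  · obtain ⟨n, hn⟩ := hτc (G.rank x + 1)
    exact ⟨n, hn ▸ (hμ _ x ⟨rfl, hx⟩).trans (hμc _)⟩
  · rintro x ⟨n, hxτ⟩
    obtain ⟨k, hτk⟩ := hcτ n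
    exact hco _ (hcJ k) x (hxτ.trans hτk)

end Zigzag
end

section
/- Let Γ be a graded graph and let φ be an indecomposable harmonic function on Γ that is either finite or semifinite. Then the support supp(φ) = {λ ∈ Γ : φ(λ) > 0} is a saturated coideal of Γ, and it is primitive. -/
/-!
Common definitions: graded graphs, ideals and coideals, harmonic functions and the
cone `K⁺`, finite / semifinite / indecomposable harmonic functions.
-/

open scoped ENNReal NNReal

/-!
If `supp φ = J₁ ∪ J₂`, let `ψᵢ` be the part of `φ` carried by `Jᵢ`: the mass of `φ` that stays
in `Jᵢ` however far it is pushed up the graph. As the `Jᵢ` are coideals, `ψᵢ` is harmonic,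
`ψᵢ ≤ φ`, `ψᵢ` vanishes off `Jᵢ`, and `φ ≤ ψ₁ + ψ₂`. Harmonic functions are monotone for `≤_K`
(push a relation high enough and it becomes an identity of combinations), so `(ψ₁ + φ) / 2` is
finite or semifinite along with `φ`, and indecomposability makes it proportional to `φ`. Hence
`ψ₁` either vanishes wherever `φ` is finite or is positive on the whole support, giving
`supp φ = J₂` or `supp φ = J₁`.
-/

namespace Zigzag

namespace GradedGraph

open Finsupp

variable {G : GradedGraph} {φ ψ : G.V → ℝ≥0∞}

lemma mem_upFinset {x y : G.V} : y ∈ G.upFinset x ↔ G.adj x y :=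
  Set.Finite.mem_toFinset _

lemma Harmonic.add (hφ : G.Harmonic φ) (hψ : G.Harmonic ψ) : G.Harmonic (φ + ψ) := fun x => by
  simp only [Pi.add_apply, Finset.sum_add_distrib, ← hφ x, ← hψ x]

lemma Harmonic.const_mul (hφ : G.Harmonic φ) (c : ℝ≥0∞) : G.Harmonic (fun x => c * φ x) :=
  fun x => by simp only [hφ x, Finset.mul_sum]

lemma Harmonic.le_of_adj (hφ : G.Harmonic φ) {x y : G.V} (h : G.adj x y) : φ y ≤ φ x := by
  rw [hφ x]
  exact Finset.single_le_sum (fun _ _ => zero_le) (mem_upFinset.2 h)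

lemma Harmonic.le_of_le (hφ : G.Harmonic φ) {x y : G.V} (h : G.le x y) : φ y ≤ φ x := by
  induction h with
  | refl => exact le_rfl
  | tail _ hadj ih => exact (hφ.le_of_adj hadj).trans ih

lemma Harmonic.isSatCoideal_support (hφ : G.Harmonic φ) : G.IsSatCoideal {x | φ x ≠ 0} := by
  refine ⟨fun a ha b hba hb => ha (le_zero_iff.1 (hb ▸ hφ.le_of_le hba)), fun a ha => ?_⟩
  have hsum : ∑ y ∈ G.upFinset a, φ y ≠ 0 := hφ a ▸ ha
  obtain ⟨y, hy, hy0⟩ := Finset.exists_ne_zero_of_sum_ne_zero hsum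
  exact ⟨y, hy0, mem_upFinset.1 hy⟩

section phiHat

lemma phiHat_eq_sum {f : G.V →₀ ℝ} {t : Finset G.V} (h : f.support ⊆ t) :
    G.phiHat φ f = ∑ x ∈ t, ENNReal.ofReal (f x) * φ x :=
  Finset.sum_subset h fun x _ hx => by rw [notMem_support_iff.1 hx, ENNReal.ofReal_zero, zero_mul]

lemma phiHat_add {f g : G.V →₀ ℝ} (hf : ∀ x, 0 ≤ f x) (hg : ∀ x, 0 ≤ g x) :
    G.phiHat φ (f + g) = G.phiHat φ f + G.phiHat φ g := by
  classical
  rw [phiHat_eq_sum (t := f.support ∪ g.support) support_add,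
    phiHat_eq_sum (t := f.support ∪ g.support) Finset.subset_union_left,
    phiHat_eq_sum (t := f.support ∪ g.support) Finset.subset_union_right,
    ← Finset.sum_add_distrib]
  refine Finset.sum_congr rfl fun x _ => ?_
  rw [Finsupp.add_apply, ENNReal.ofReal_add (hf x) (hg x), add_mul]

lemma phiHat_sum {ι : Type*} (t : Finset ι) (w : ι → G.V →₀ ℝ) (hw : ∀ i x, 0 ≤ w i x) :
    G.phiHat φ (∑ i ∈ t, w i) = ∑ i ∈ t, G.phiHat φ (w i) := by
  classical
  induction t using Finset.cons_induction with
  | empty => simp [phiHat]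
  | cons a s ha ih =>
    have hs : ∀ x, 0 ≤ (∑ i ∈ s, w i) x := fun x => by
      rw [finsetSum_apply]
      exact Finset.sum_nonneg fun i _ => hw i x
    rw [Finset.sum_cons, Finset.sum_cons, phiHat_add (hw a) hs, ih]

lemma phiHat_smul {c : ℝ} (hc : 0 ≤ c) (f : G.V →₀ ℝ) :
    G.phiHat φ (c • f) = ENNReal.ofReal c * G.phiHat φ f := by
  rw [phiHat_eq_sum support_smul, phiHat, Finset.mul_sum]
  refine Finset.sum_congr rfl fun x _ => ?_
  rw [Finsupp.smul_apply, smul_eq_mul, ENNReal.ofReal_mul hc, mul_assoc]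

lemma phiHat_single (x : G.V) (c : ℝ) : G.phiHat φ (single x c) = ENNReal.ofReal c * φ x := by
  rw [phiHat_eq_sum support_single_subset, Finset.sum_singleton, single_eq_same]

lemma phiHat_const_mul (c : ℝ≥0∞) (f : G.V →₀ ℝ) :
    G.phiHat (fun x => c * φ x) f = c * G.phiHat φ f := by
  rw [phiHat, phiHat, Finset.mul_sum]
  exact Finset.sum_congr rfl fun x _ => mul_left_comm _ _ _

lemma phiHat_mono_left (h : ∀ x, ψ x ≤ φ x) (f : G.V →₀ ℝ) : G.phiHat ψ f ≤ G.phiHat φ f :=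
  Finset.sum_le_sum fun x _ => mul_le_mul_right (h x) _

lemma le_phiHat {f : G.V →₀ ℝ} {x : G.V} (hx : x ∈ f.support) :
    ENNReal.ofReal (f x) * φ x ≤ G.phiHat φ f :=
  Finset.single_le_sum (f := fun v => ENNReal.ofReal (f v) * φ v) (fun _ _ => zero_le) hx

end phiHat

section push

variable (G) in
/-- The `k`-fold push of a vertex: the combination `∑ dim(z, w) • w` over the vertices `w`
lying `k` levels above `z`. -/
noncomputable def push : ℕ → G.V → G.V →₀ ℝ
  | 0, z => single z 1
  | k + 1, z => ∑ y ∈ G.upFinset z, push k y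

lemma push_nonneg (k : ℕ) (z x : G.V) : 0 ≤ G.push k z x := by
  induction k generalizing z with
  | zero => exact single_nonneg.2 zero_le_one x
  | succ k ih =>
    rw [push, finsetSum_apply]
    exact Finset.sum_nonneg fun y _ => ih y

lemma Harmonic.phiHat_push (hφ : G.Harmonic φ) (k : ℕ) (z : G.V) :
    G.phiHat φ (G.push k z) = φ z := by
  induction k generalizing z with
  | zero => rw [push, phiHat_single, ENNReal.ofReal_one, one_mul]
  | succ k ih =>
    rw [push, phiHat_sum _ _ fun y => push_nonneg k y, hφ z]
    exact Finset.sum_congr rfl fun y _ => ih y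

variable (G) in
/-- Pushes every vertex of a combination up to level `N` (vertices above level `N` stay put). -/
noncomputable def pushTo (N : ℕ) : (G.V →₀ ℝ) →ₗ[ℝ] (G.V →₀ ℝ) :=
  linearCombination ℝ fun y => G.push (N - G.rank y) y

lemma pushTo_apply (N : ℕ) (u : G.V →₀ ℝ) :
    G.pushTo N u = ∑ y ∈ u.support, u y • G.push (N - G.rank y) y :=
  linearCombination_apply ℝ u

lemma pushTo_relOf {N : ℕ} {z : G.V} (hz : G.rank z < N) : G.pushTo N (G.relOf z) = 0 := by
  have hN : N - G.rank z = N - (G.rank z + 1) + 1 := by omega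
  simp only [pushTo, relOf, map_sub, map_sum, linearCombination_single, one_smul]
  rw [hN, push, sub_eq_zero]
  exact Finset.sum_congr rfl fun y hy => by rw [G.rank_adj (mem_upFinset.1 hy)]

lemma eventually_pushTo_eq_zero {r : G.V →₀ ℝ} (hr : r ∈ G.Krel) :
    ∀ᶠ N in Filter.atTop, G.pushTo N r = 0 := by
  induction hr using Submodule.span_induction with
  | mem r hr =>
    obtain ⟨z, rfl⟩ := hr
    exact Filter.eventually_gt_atTop (G.rank z) |>.mono fun N hN => pushTo_relOf hN
  | zero => exact .of_forall fun N => map_zero _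
  | add r s _ _ hr hs => exact (hr.and hs).mono fun N h => by rw [map_add, h.1, h.2, add_zero]
  | smul c r _ hr => exact hr.mono fun N h => by rw [map_smul, h, smul_zero]

lemma pushTo_nonneg (N : ℕ) {u : G.V →₀ ℝ} (hu : ∀ x, 0 ≤ u x) (x : G.V) :
    0 ≤ G.pushTo N u x := by
  rw [pushTo_apply, finsetSum_apply]
  exact Finset.sum_nonneg fun y _ => mul_nonneg (hu y) (push_nonneg _ _ _)

lemma Harmonic.phiHat_pushTo (hψ : G.Harmonic ψ) (N : ℕ) {u : G.V →₀ ℝ}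
    (hu : ∀ x, 0 ≤ u x) : G.phiHat ψ (G.pushTo N u) = G.phiHat ψ u := by
  rw [pushTo_apply, phiHat_sum _ _ fun y x => mul_nonneg (hu y) (push_nonneg _ _ x)]
  exact Finset.sum_congr rfl fun y _ => by rw [phiHat_smul (hu y), hψ.phiHat_push]

lemma leK_refl (f : G.V →₀ ℝ) : G.leK (G.kmk f) (G.kmk f) :=
  ⟨0, fun _ => le_rfl, by rw [sub_self]; exact Submodule.Quotient.mk_zero _⟩

/-- Pushing far enough up turns the relation `f = g + h` in `K(Γ)` into an identity of
combinations, on which `phiHat ψ` is additive even when `ψ` takes the value `∞`. -/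
lemma Harmonic.phiHat_mono_leK (hψ : G.Harmonic ψ) {f g : G.V →₀ ℝ} (hf : ∀ x, 0 ≤ f x)
    (hg : ∀ x, 0 ≤ g x) (hgf : G.leK (G.kmk g) (G.kmk f)) :
    G.phiHat ψ g ≤ G.phiHat ψ f := by
  obtain ⟨h, hh, hkh⟩ := hgf
  have hrel : f - g - h ∈ G.Krel := (Submodule.Quotient.eq G.Krel).1 <| by
    rw [Submodule.Quotient.mk_sub]
    exact hkh.symm
  obtain ⟨N, hN⟩ := (eventually_pushTo_eq_zero hrel).exists
  have hsplit : G.pushTo N f = G.pushTo N g + G.pushTo N h := by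
    rwa [map_sub, map_sub, sub_sub, sub_eq_zero] at hN
  calc G.phiHat ψ g = G.phiHat ψ (G.pushTo N g) := (hψ.phiHat_pushTo N hg).symm
    _ ≤ G.phiHat ψ (G.pushTo N g) + G.phiHat ψ (G.pushTo N h) := le_self_add
    _ = G.phiHat ψ f := by
      rw [← phiHat_add (pushTo_nonneg N hg) (pushTo_nonneg N hh), ← hsplit,
        hψ.phiHat_pushTo N hf]

end push

section harmonicPart

variable (G) in
/-- The mass of `φ` that the `k`-fold push of `z` leaves in `B`. -/
noncomputable def massIn (φ : G.V → ℝ≥0∞) (B : Set G.V) : ℕ → G.V → ℝ≥0∞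
  | 0, z => B.indicator φ z
  | k + 1, z => ∑ y ∈ G.upFinset z, massIn φ B k y

variable (G) in
/-- The part of `φ` carried by `B`: the mass that stays in `B` however far it is pushed. -/
noncomputable def harmonicPart (φ : G.V → ℝ≥0∞) (B : Set G.V) (z : G.V) : ℝ≥0∞ :=
  ⨅ k, G.massIn φ B k z

variable {B B₁ B₂ : Set G.V}

/-- Mass that leaves a coideal never comes back. -/
lemma massIn_succ_le (hφ : G.Harmonic φ) (hB : G.IsCoideal B) (k : ℕ) (z : G.V) :
    G.massIn φ B (k + 1) z ≤ G.massIn φ B k z := by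
  induction k generalizing z with
  | zero =>
    by_cases hz : z ∈ B
    · rw [massIn, massIn, Set.indicator_of_mem hz, hφ z]
      exact Finset.sum_le_sum fun y _ => Set.indicator_le_self B φ y
    · rw [massIn, massIn, Set.indicator_of_notMem hz]
      refine (Finset.sum_eq_zero fun y hy => ?_).le
      exact Set.indicator_of_notMem (fun hyB => hz (hB y hyB z (.single (mem_upFinset.1 hy)))) φ
  | succ k ih => exact Finset.sum_le_sum fun y _ => ih y

lemma massIn_antitone (hφ : G.Harmonic φ) (hB : G.IsCoideal B) (z : G.V) :
    Antitone fun k => G.massIn φ B k z :=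
  antitone_nat_of_succ_le fun k => massIn_succ_le hφ hB k z

lemma harmonicPart_le (B : Set G.V) (z : G.V) : G.harmonicPart φ B z ≤ φ z :=
  (iInf_le _ 0).trans (Set.indicator_le_self B φ z)

lemma harmonicPart_eq_zero {z : G.V} (hz : z ∉ B) : G.harmonicPart φ B z = 0 :=
  le_zero_iff.1 ((iInf_le _ 0).trans (Set.indicator_of_notMem hz φ).le)

lemma harmonicPart_harmonic (hφ : G.Harmonic φ) (hB : G.IsCoideal B) :
    G.Harmonic (G.harmonicPart φ B) := by
  intro z
  have hshift : G.harmonicPart φ B z = ⨅ k, G.massIn φ B (k + 1) z :=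
    le_antisymm (le_iInf fun k => iInf_le _ (k + 1))
      (le_iInf fun k => iInf_le_of_le k (massIn_succ_le hφ hB k z))
  rw [hshift]
  exact ENNReal.iInf_sum (f := fun k y => G.massIn φ B k y) fun _ i j => ⟨max i j, fun y _ =>
    ⟨massIn_antitone hφ hB y (le_max_left i j), massIn_antitone hφ hB y (le_max_right i j)⟩⟩

lemma le_massIn_add_massIn (hφ : G.Harmonic φ) (hcov : ∀ w, φ w ≠ 0 → w ∈ B₁ ∪ B₂)
    (k : ℕ) (z : G.V) : φ z ≤ G.massIn φ B₁ k z + G.massIn φ B₂ k z := by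
  induction k generalizing z with
  | zero =>
    by_cases h0 : φ z = 0
    · simp [h0]
    · rcases hcov z h0 with h | h
      · exact (Set.indicator_of_mem h φ).ge.trans le_self_add
      · exact (Set.indicator_of_mem h φ).ge.trans le_add_self
  | succ k ih =>
    rw [hφ z, massIn, massIn, ← Finset.sum_add_distrib]
    exact Finset.sum_le_sum fun y _ => ih y

lemma le_harmonicPart_add_harmonicPart (hφ : G.Harmonic φ) (hB₁ : G.IsCoideal B₁)
    (hB₂ : G.IsCoideal B₂) (hcov : ∀ w, φ w ≠ 0 → w ∈ B₁ ∪ B₂) (z : G.V) :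
    φ z ≤ G.harmonicPart φ B₁ z + G.harmonicPart φ B₂ z := by
  rw [harmonicPart, harmonicPart, ENNReal.iInf_add_iInf fun i j => ⟨max i j,
    add_le_add (massIn_antitone hφ hB₁ z (le_max_left i j))
      (massIn_antitone hφ hB₂ z (le_max_right i j))⟩]
  exact le_iInf fun k => le_massIn_add_massIn hφ hcov k z

lemma support_eq_of_harmonicPart_ne_zero (hB : B ⊆ {x | φ x ≠ 0})
    (hpos : ∀ x, φ x ≠ 0 → G.harmonicPart φ B x ≠ 0) : {x | φ x ≠ 0} = B :=
  Set.Subset.antisymm (fun x hx => by_contra fun hxB => hpos x hx (harmonicPart_eq_zero hxB)) hB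

end harmonicPart

section semifinite

lemma Semifinite.exists_finite_pos_leK (hs : G.Semifinite φ) {x : G.V} (hx : φ x = ⊤) :
    ∃ g : G.V →₀ ℝ, (∀ v, 0 ≤ g v) ∧ G.leK (G.kmk g) (G.kmk (single x 1)) ∧
      ∃ y ∈ g.support, ENNReal.ofReal (g y) ≠ 0 ∧ φ y ≠ 0 ∧ φ y ≠ ⊤ := by
  have hsup := hs.2 (single x 1) (single_nonneg.2 zero_le_one)
  rw [phiHat_single, ENNReal.ofReal_one, one_mul, hx] at hsup
  obtain ⟨g, ⟨hg, hgx, hgfin⟩, hg0⟩ : ∃ g ∈ {g : G.V →₀ ℝ | (∀ v, 0 ≤ g v) ∧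
      G.leK (G.kmk g) (G.kmk (single x 1)) ∧ G.phiHat φ g ≠ ⊤}, G.phiHat φ g ≠ 0 := by
    by_contra! hall
    exact ENNReal.top_ne_zero (hsup.trans (le_zero_iff.1 (iSup₂_le fun g hg => (hall g hg).le)))
  obtain ⟨y, hy, hy0⟩ := Finset.exists_ne_zero_of_sum_ne_zero hg0
  have hyfin : ENNReal.ofReal (g y) * φ y ≠ ⊤ := ne_top_of_le_ne_top hgfin (le_phiHat hy)
  exact ⟨g, hg, hgx, y, hy, left_ne_zero_of_mul hy0, right_ne_zero_of_mul hy0,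
    fun ht => hyfin (ENNReal.mul_eq_top.2 (.inl ⟨left_ne_zero_of_mul hy0, ht⟩))⟩

/-- Semifiniteness puts finite positive mass `≤_K`-below each infinite vertex. -/
lemma ne_zero_of_ne_zero_of_ne_top (hfs : G.FiniteH φ ∨ G.Semifinite φ) (hψ : G.Harmonic ψ)
    (hpos : ∀ y, φ y ≠ 0 → φ y ≠ ⊤ → ψ y ≠ 0) {x : G.V} (hx : φ x ≠ 0) : ψ x ≠ 0 := by
  by_cases hxt : φ x = ⊤
  · obtain ⟨g, hg, hgx, y, hy, hgy, hy0, hyt⟩ :=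
      (hfs.resolve_left fun hfin => hfin x hxt).exists_finite_pos_leK hxt
    have hle := (le_phiHat hy).trans (hψ.phiHat_mono_leK (single_nonneg.2 zero_le_one) hg hgx)
    rw [phiHat_single, ENNReal.ofReal_one, one_mul] at hle
    exact fun h0 => mul_ne_zero hgy (hpos y hy0 hyt) (le_zero_iff.1 (h0 ▸ hle))
  · exact hpos x hx hxt

lemma Semifinite.of_le_of_const_mul_le (hs : G.Semifinite φ) (hψ : G.Harmonic ψ)
    (hle : ∀ x, ψ x ≤ φ x) {c : ℝ≥0∞} (hc : c ≠ 0) (hge : ∀ x, c * φ x ≤ ψ x) :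
    G.Semifinite ψ := by
  obtain ⟨x₀, hx₀⟩ := hs.1
  refine ⟨⟨x₀, top_unique ((ENNReal.mul_top hc).symm.trans_le (hx₀ ▸ hge x₀))⟩, fun f hf => ?_⟩
  refine le_antisymm ?_ (iSup₂_le fun g ⟨hg, hgf, _⟩ => hψ.phiHat_mono_leK hf hg hgf)
  by_cases hft : G.phiHat ψ f = ⊤
  · have hφf : G.phiHat φ f = ⊤ := top_unique (hft ▸ phiHat_mono_left hle f)
    calc G.phiHat ψ f = c * G.phiHat φ f := by rw [hft, hφf, ENNReal.mul_top hc]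
      _ ≤ _ := ?_
    rw [hs.2 f hf, ENNReal.mul_iSup]
    refine iSup_le fun g => ?_
    rw [ENNReal.mul_iSup]
    refine iSup_le fun ⟨hg, hgf, hgfin⟩ => le_iSup₂_of_le g ⟨hg, hgf, ?_⟩ ?_
    · exact ne_top_of_le_ne_top hgfin (phiHat_mono_left hle g)
    · exact (phiHat_const_mul c g).symm.trans_le (phiHat_mono_left hge g)
  · exact le_iSup₂_of_le f ⟨hf, leK_refl f, hft⟩ le_rfl

end semifinite

section indecomposable

variable (G) in
def IsIndecomposable (φ : G.V → ℝ≥0∞) : Prop :=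
  (G.FiniteH φ ∧ G.IndecFinite φ) ∨ (G.Semifinite φ ∧ G.IndecSemifinite φ)

lemma IsIndecomposable.finiteH_or_semifinite (hind : G.IsIndecomposable φ) :
    G.FiniteH φ ∨ G.Semifinite φ :=
  hind.imp And.left And.left

lemma IsIndecomposable.exists_midpoint_eq_const_mul (hind : G.IsIndecomposable φ)
    (hφ : G.Harmonic φ) (hψ : G.Harmonic ψ) (hle : ∀ x, ψ x ≤ φ x) {y : G.V}
    (hyt : φ y ≠ ⊤) (hψy : ψ y ≠ 0) :
    ∃ c : ℝ≥0, ∀ x, φ x ≠ ⊤ → 2⁻¹ * ψ x + 2⁻¹ * φ x = c * φ x := by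
  set φ' : G.V → ℝ≥0∞ := fun x => 2⁻¹ * ψ x + 2⁻¹ * φ x
  have hharm : G.Harmonic φ' := (hψ.const_mul 2⁻¹).add (hφ.const_mul 2⁻¹)
  have hle' : ∀ x, φ' x ≤ φ x := fun x =>
    calc 2⁻¹ * ψ x + 2⁻¹ * φ x ≤ 2⁻¹ * φ x + 2⁻¹ * φ x := by gcongr; exact hle x
      _ = φ x := by rw [← add_mul, ENNReal.inv_two_add_inv_two, one_mul]
  have hy' : φ' y ≠ 0 := by simp [φ', hψy]
  rcases hind with ⟨-, hind⟩ | ⟨hs, hind⟩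
  · obtain ⟨c, hc⟩ := hind φ' hharm hle' ⟨y, hy'⟩
    exact ⟨c, fun x _ => hc x⟩
  · have hs' : G.Semifinite φ' :=
      hs.of_le_of_const_mul_le hharm hle' (c := 2⁻¹) (by norm_num) fun x => le_add_self
    exact hind φ' hharm (.inr hs') hle' ⟨y, hyt, hy'⟩

/-- The indecomposability argument: `(ψ + φ) / 2` is proportional to `φ`, and the constant
must be `1/2` as soon as `ψ` vanishes at one finite point of the support. -/
lemma IsIndecomposable.ne_zero_of_le (hind : G.IsIndecomposable φ) (hφ : G.Harmonic φ)
    (hψ : G.Harmonic ψ) (hle : ∀ x, ψ x ≤ φ x) {y : G.V} (hyt : φ y ≠ ⊤) (hψy : ψ y ≠ 0)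
    {x : G.V} (hx : φ x ≠ 0) : ψ x ≠ 0 := by
  obtain ⟨c, hc⟩ := hind.exists_midpoint_eq_const_mul hφ hψ hle hyt hψy
  refine ne_zero_of_ne_zero_of_ne_top hind.finiteH_or_semifinite hψ (fun z hz0 hzt hψz => ?_) hx
  have hc2 : (c : ℝ≥0∞) = 2⁻¹ := by
    have hcz := hc z hzt
    rw [hψz, mul_zero, zero_add] at hcz
    exact ((ENNReal.mul_left_inj hz0 hzt).1 hcz).symm
  have hcy : 2⁻¹ * ψ y + 2⁻¹ * φ y = 0 + 2⁻¹ * φ y := by rw [hc y hyt, hc2, zero_add]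
  have hψy2 := (ENNReal.add_left_inj (ENNReal.mul_ne_top (by norm_num) hyt)).1 hcy
  exact hψy (by simpa using hψy2)

end indecomposable

end GradedGraph

open GradedGraph

/-- The support of an indecomposable finite or semifinite harmonic
function on a graded graph is a saturated primitive coideal. -/
theorem support_isPrimCoideal (G : GradedGraph) (φ : G.V → ℝ≥0∞)
    (hφ : G.Harmonic φ)
    (h : (G.FiniteH φ ∧ G.IndecFinite φ) ∨ (G.Semifinite φ ∧ G.IndecSemifinite φ)) :
    G.IsSatCoideal {x | φ x ≠ 0} ∧ G.IsPrimCoideal {x | φ x ≠ 0} := by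
  have hsat := hφ.isSatCoideal_support
  refine ⟨hsat, hsat, fun J₁ J₂ hJ₁ hJ₂ hun => ?_⟩
  have hind : G.IsIndecomposable φ := h
  have hcov : ∀ w, φ w ≠ 0 → w ∈ J₁ ∪ J₂ := fun w hw => hun ▸ hw
  have hψ₁ := harmonicPart_harmonic hφ hJ₁.1
  have hψ₂ := harmonicPart_harmonic hφ hJ₂.1
  by_cases h₁ : ∃ y, φ y ≠ ⊤ ∧ G.harmonicPart φ J₁ y ≠ 0
  · obtain ⟨y, hyt, hψy⟩ := h₁
    exact .inl <| support_eq_of_harmonicPart_ne_zero (hun ▸ Set.subset_union_left)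
      fun x hx => hind.ne_zero_of_le hφ hψ₁ (harmonicPart_le J₁) hyt hψy hx
  · push Not at h₁
    refine .inr <| support_eq_of_harmonicPart_ne_zero (hun ▸ Set.subset_union_right)
      fun x hx => ne_zero_of_ne_zero_of_ne_top hind.finiteH_or_semifinite hψ₂ ?_ hx
    intro y hy0 hyt hψy
    have hcover := le_harmonicPart_add_harmonicPart hφ hJ₁.1 hJ₂.1 hcov y
    rw [h₁ y hyt, hψy, add_zero] at hcover
    exact hy0 (le_zero_iff.1 hcover)

end Zigzag
end

section
/- Let n, m ≥ 2 be integers and let n₁, m₁ ≥ 0 with N = n₁ + m₁ ≥ 1. The number of saturated chains in the subword order on binary words from the word +ⁿ−ᵐ to the word +^{n₁+n−1}−+−^{m₁+m−1} (i.e. sequences +ⁿ−ᵐ = b₀ ↗ b₁ ↗ ⋯ ↗ b_N = +^{n₁+n−1}−+−^{m₁+m−1}) equals N · N! / (n₁! · m₁!). -/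
/-!
Sorting chains by their second-to-last word gives the recursion
`#chains(u, w, K + 1) = ∑_{v ↗ w} #chains(u, v, K)`, and a word that does not contain `u` as a
subword carries no chain from `u`. The only words covered by `+ᵖ −^q` are `+^{p-1} −^q` and
`+ᵖ −^{q-1}`, so the chains from `+ⁿ −ᵐ` to `+^{n+i} −^{m+j}` are lattice paths, counted by
`C(i + j, i)`. Below `+ʳ − + −ˢ` lie `+^{r-1} − + −ˢ`, `+ʳ − + −^{s-1}`, `+^{r+1} −ˢ` and
`+ʳ −^{s+1}`, so the number `B(K, i)` of chains of length `K = i + j` from `+ⁿ −ᵐ` to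
`+^{n-1+i} − + −^{m-1+j}` satisfies `B(K + 1, i) = B(K, i - 1) + B(K, i) + C(K, i - 1) + C(K, i)`,
whose solution is `B(K, i) = K · C(K, i)`.
-/

namespace Zigzag

/-- Binary words: `true` is `+`, `false` is `−`. -/
abbrev BW := List Bool

/-- `CoveredBy a b`: `b` covers `a` in the subword order, i.e. `|b| = |a| + 1` and `a`
is a subword of `b`. -/
def CoveredBy (a b : BW) : Prop := a.Sublist b ∧ b.length = a.length + 1

abbrev RelChain {α : Type*} (R : α → α → Prop) (u w : α) (N : ℕ) : Type _ :=
  {c : Fin (N + 1) → α // c 0 = u ∧ c (Fin.last N) = w ∧ ∀ i : Fin N, R (c i.castSucc) (c i.succ)}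

namespace RelChain

variable {α : Type*} {R : α → α → Prop} {u w : α} {N : ℕ}

def succEquiv : RelChain R u w (N + 1) ≃ Σ v : {v // R v w}, RelChain R u v N where
  toFun c := ⟨⟨c.1 (Fin.last N).castSucc, by
    simpa only [Fin.succ_last, c.2.2.1] using c.2.2.2 (Fin.last N)⟩,
    ⟨Fin.init c.1, c.2.1, rfl, fun i => c.2.2.2 i.castSucc⟩⟩
  invFun d := ⟨Fin.snoc d.2.1 w, Fin.snoc_castSucc (i := (0 : Fin (N + 1))) .. ▸ d.2.2.1,
    Fin.snoc_last .., by
    refine Fin.lastCases ?_ (fun i => ?_)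
    · simpa [d.2.2.2.1] using d.1.2
    · rw [Fin.succ_castSucc, Fin.snoc_castSucc, Fin.snoc_castSucc]
      exact d.2.2.2.2 i⟩
  left_inv c := by
    obtain ⟨c, -, rfl, -⟩ := c
    exact Subtype.ext (Fin.snoc_init_self c)
  right_inv := by
    rintro ⟨⟨v, hv⟩, c, hc⟩
    exact Sigma.subtype_ext (Subtype.ext ((Fin.snoc_castSucc (α := fun _ => α) ..).trans hc.2.1))
      (Fin.init_snoc (α := fun _ => α) w c)

instance : Subsingleton (RelChain R u w 0) :=
  ⟨fun c d => Subtype.ext (funext fun i => by rw [Fin.fin_one_eq_zero i, c.2.1, d.2.1])⟩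

theorem card_zero_self : Nat.card (RelChain R u u 0) = 1 :=
  Nat.card_eq_one_iff_unique.2 ⟨inferInstance, ⟨⟨fun _ => u, rfl, rfl, Fin.elim0⟩⟩⟩

theorem card_zero_of_ne (h : u ≠ w) : Nat.card (RelChain R u w 0) = 0 :=
  have : IsEmpty (RelChain R u w 0) := ⟨fun c => h (c.2.1.symm.trans c.2.2.1)⟩
  Nat.card_of_isEmpty

theorem reflTransGen : ∀ {N : ℕ} {w : α}, RelChain R u w N → Relation.ReflTransGen R u w
  | 0, _, c => by
    obtain ⟨c, rfl, rfl, -⟩ := c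
    exact .refl
  | _ + 1, _, c => (reflTransGen (succEquiv c).2).tail (succEquiv c).1.2

theorem finite (hR : ∀ w, {v | R v w}.Finite) : ∀ {N : ℕ} {w : α}, Finite (RelChain R u w N)
  | 0, _ => Finite.of_subsingleton
  | N + 1, w => by
    have : Finite {v // R v w} := (hR w).to_subtype
    have : ∀ v : {v // R v w}, Finite (RelChain R u v N) := fun _ => finite hR
    exact Finite.of_equiv _ succEquiv.symm

theorem card_succ (hR : ∀ w, {v | R v w}.Finite) (s : Finset α) (hs : ∀ v, v ∈ s ↔ R v w) :
    Nat.card (RelChain R u w (N + 1)) = ∑ v ∈ s, Nat.card (RelChain R u v N) := by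
  have := fun v => finite hR (u := u) (N := N) (w := v)
  rw [Nat.card_congr (succEquiv.trans (Equiv.sigmaCongrLeft' (Equiv.subtypeEquivRight
    fun v => (hs v).symm))), Nat.card_sigma]
  exact Finset.sum_coe_sort s fun v => Nat.card (RelChain R u v N)

end RelChain

open List
open scoped Nat

theorem finite_setOf_coveredBy (w : BW) : {v | CoveredBy v w}.Finite :=
  w.sublists.toFinset.finite_toSet.subset fun _ hv => by simpa using hv.1

theorem sublist_of_reflTransGen_coveredBy {u w : BW} (h : Relation.ReflTransGen CoveredBy u w) :
    u <+ w := by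
  induction h with
  | refl => exact .refl _
  | tail _ hvw ih => exact ih.trans hvw.1

theorem coveredBy_append_iff {v a b : BW} :
    CoveredBy v (a ++ b) ↔
      (∃ a', CoveredBy a' a ∧ v = a' ++ b) ∨ ∃ b', CoveredBy b' b ∧ v = a ++ b' := by
  constructor
  · rintro ⟨h, hlen⟩
    obtain ⟨a', b', rfl, ha, hb⟩ := sublist_append_iff.1 h
    have := ha.length_le
    have := hb.length_le
    simp only [length_append] at hlen
    rcases Nat.lt_or_ge a'.length a.length with h | h
    · exact .inl ⟨a', ⟨ha, by omega⟩, by rw [hb.eq_of_length (by omega)]⟩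
    · exact .inr ⟨b', ⟨hb, by omega⟩, by rw [ha.eq_of_length (by omega)]⟩
  · rintro (⟨a', ⟨ha, hlen⟩, rfl⟩ | ⟨b', ⟨hb, hlen⟩, rfl⟩)
    · exact ⟨ha.append_right b, by simp [hlen]; omega⟩
    · exact ⟨hb.append_left a, by simp [hlen]; omega⟩

theorem coveredBy_replicate_add_one_iff {v : BW} {k : ℕ} {x : Bool} :
    CoveredBy v (replicate (k + 1) x) ↔ v = replicate k x := by
  constructor
  · rintro ⟨h, hlen⟩
    obtain ⟨l, -, rfl⟩ := sublist_replicate_iff.1 h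
    simp only [length_replicate] at hlen
    rw [show l = k by omega]
  · rintro rfl
    exact ⟨replicate_sublist_replicate x |>.2 k.le_succ, by simp⟩

theorem coveredBy_singleton_iff {v : BW} {x : Bool} : CoveredBy v [x] ↔ v = [] :=
  coveredBy_replicate_add_one_iff (k := 0)

theorem coveredBy_pair_iff {v : BW} {x y : Bool} : CoveredBy v [x, y] ↔ v = [y] ∨ v = [x] := by
  simpa [coveredBy_singleton_iff] using coveredBy_append_iff (v := v) (a := [x]) (b := [y])

def blockWord (p q : ℕ) : BW := replicate p true ++ replicate q false

def kinkWord (r s : ℕ) : BW := replicate r true ++ [false, true] ++ replicate s false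

@[simp] theorem count_true_blockWord (p q : ℕ) : (blockWord p q).count true = p := by
  simp [blockWord, count_replicate]

@[simp] theorem count_false_blockWord (p q : ℕ) : (blockWord p q).count false = q := by
  simp [blockWord, count_replicate]

@[simp] theorem count_true_kinkWord (r s : ℕ) : (kinkWord r s).count true = r + 1 := by
  simp [kinkWord, count_replicate]

@[simp] theorem count_false_kinkWord (r s : ℕ) : (kinkWord r s).count false = s + 1 := by
  simp [kinkWord, count_replicate]

theorem coveredBy_blockWord_add_one_iff {v : BW} {p q : ℕ} :
    CoveredBy v (blockWord (p + 1) (q + 1)) ↔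
      v = blockWord p (q + 1) ∨ v = blockWord (p + 1) q := by
  simp only [blockWord, coveredBy_append_iff, coveredBy_replicate_add_one_iff, exists_eq_left]

theorem coveredBy_kinkWord_add_one_iff {v : BW} {r s : ℕ} :
    CoveredBy v (kinkWord (r + 1) (s + 1)) ↔ v = kinkWord r (s + 1) ∨ v = kinkWord (r + 1) s ∨
      v = blockWord (r + 2) (s + 1) ∨ v = blockWord (r + 1) (s + 2) := by
  have hr : replicate (r + 2) true = replicate (r + 1) true ++ [true] := replicate_succ'
  have hs : replicate (s + 2) false = [false] ++ replicate (s + 1) false := replicate_succ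
  simp only [kinkWord, blockWord, coveredBy_append_iff, coveredBy_replicate_add_one_iff,
    coveredBy_pair_iff, exists_eq_left, or_and_right, exists_or, hr, hs, append_assoc]
  tauto

@[simp] theorem blockWord_inj {p q p' q' : ℕ} : blockWord p q = blockWord p' q' ↔ p = p' ∧ q = q' :=
  ⟨fun h => ⟨by simpa using congrArg (count true) h, by simpa using congrArg (count false) h⟩,
    by rintro ⟨rfl, rfl⟩; rfl⟩

@[simp] theorem kinkWord_inj {r s r' s' : ℕ} : kinkWord r s = kinkWord r' s' ↔ r = r' ∧ s = s' :=
  ⟨fun h => ⟨by simpa using congrArg (count true) h, by simpa using congrArg (count false) h⟩,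
    by rintro ⟨rfl, rfl⟩; rfl⟩

@[simp] theorem kinkWord_ne_blockWord (r s p q : ℕ) : kinkWord r s ≠ blockWord p q := by
  intro h
  have hp : r + 1 = p := by simpa using congrArg (count true) h
  have := congrArg (·[r]?) h
  simp [blockWord, kinkWord, ← hp, getElem?_append_left] at this

theorem card_chain_eq_zero_of_count_lt {u w : BW} {N : ℕ} (b : Bool) (h : w.count b < u.count b) :
    Nat.card (RelChain CoveredBy u w N) = 0 :=
  have : IsEmpty (RelChain CoveredBy u w N) :=
    ⟨fun c => (sublist_of_reflTransGen_coveredBy c.reflTransGen |>.count_le b).not_gt h⟩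
  Nat.card_of_isEmpty

theorem card_chain_blockWord_succ {u : BW} {p q N : ℕ} (hp : 0 < p) (hq : 0 < q) :
    Nat.card (RelChain CoveredBy u (blockWord p q) (N + 1)) =
      Nat.card (RelChain CoveredBy u (blockWord (p - 1) q) N) +
        Nat.card (RelChain CoveredBy u (blockWord p (q - 1)) N) := by
  obtain ⟨p, rfl⟩ := Nat.exists_eq_add_one.2 hp
  obtain ⟨q, rfl⟩ := Nat.exists_eq_add_one.2 hq
  rw [RelChain.card_succ finite_setOf_coveredBy {blockWord p (q + 1), blockWord (p + 1) q}
    (fun v => by simp [coveredBy_blockWord_add_one_iff]), Finset.sum_pair (by simp)]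
  rfl

theorem card_chain_kinkWord_succ {u : BW} {r s N : ℕ} (hr : 0 < r) (hs : 0 < s) :
    Nat.card (RelChain CoveredBy u (kinkWord r s) (N + 1)) =
      Nat.card (RelChain CoveredBy u (kinkWord (r - 1) s) N) +
        Nat.card (RelChain CoveredBy u (kinkWord r (s - 1)) N) +
        Nat.card (RelChain CoveredBy u (blockWord (r + 1) s) N) +
        Nat.card (RelChain CoveredBy u (blockWord r (s + 1)) N) := by
  obtain ⟨r, rfl⟩ := Nat.exists_eq_add_one.2 hr
  obtain ⟨s, rfl⟩ := Nat.exists_eq_add_one.2 hs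
  rw [RelChain.card_succ finite_setOf_coveredBy
    {kinkWord r (s + 1), kinkWord (r + 1) s, blockWord (r + 2) (s + 1), blockWord (r + 1) (s + 2)}
    (fun v => by simp [coveredBy_kinkWord_add_one_iff]), Finset.sum_insert (by simp),
    Finset.sum_insert (by simp), Finset.sum_pair (by simp)]
  simp only [add_tsub_cancel_right, add_assoc]

theorem card_chain_blockWord {n m : ℕ} (hn : 0 < n) (hm : 0 < m) {K : ℕ} :
    ∀ {i j p q : ℕ}, n + i = p → m + j = q → i + j = K →
      Nat.card (RelChain CoveredBy (blockWord n m) (blockWord p q) K) = K.choose i := by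
  induction K with
  | zero =>
    rintro i j p q rfl rfl hK
    obtain ⟨rfl, rfl⟩ : i = 0 ∧ j = 0 := by omega
    exact RelChain.card_zero_self
  | succ K ih =>
    rintro (_ | i) (_ | j) p q rfl rfl hK
    · omega
    · rw [card_chain_blockWord_succ (by omega) (by omega),
        card_chain_eq_zero_of_count_lt true (by simp; omega),
        ih (i := 0) (j := j) (by omega) (by omega) (by omega)]
      simp
    · rw [card_chain_blockWord_succ (by omega) (by omega),
        ih (i := i) (j := 0) (by omega) (by omega) (by omega),
        card_chain_eq_zero_of_count_lt false (by simp; omega), show i = K by omega]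
      simp
    · rw [card_chain_blockWord_succ (by omega) (by omega),
        ih (i := i) (j := j + 1) (by omega) (by omega) (by omega),
        ih (i := i + 1) (j := j) (by omega) (by omega) (by omega), Nat.choose_succ_succ']

theorem card_chain_kinkWord {n m : ℕ} (hn : 1 < n) (hm : 1 < m) {K : ℕ} :
    ∀ {i j r s : ℕ}, n - 1 + i = r → m - 1 + j = s → i + j = K →
      Nat.card (RelChain CoveredBy (blockWord n m) (kinkWord r s) K) = K * K.choose i := by
  have hn₀ : 0 < n := by omega
  have hm₀ : 0 < m := by omega
  induction K with
  | zero =>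
    rintro i j r s rfl rfl hK
    obtain ⟨rfl, rfl⟩ : i = 0 ∧ j = 0 := by omega
    rw [RelChain.card_zero_of_ne (kinkWord_ne_blockWord _ _ _ _).symm, zero_mul]
  | succ K ih =>
    rintro (_ | i) (_ | j) r s rfl rfl hK
    · omega
    · rw [card_chain_kinkWord_succ (by omega) (by omega),
        card_chain_eq_zero_of_count_lt true (by simp; omega),
        ih (i := 0) (j := j) (by omega) (by omega) (by omega),
        card_chain_blockWord hn₀ hm₀ (i := 0) (j := j) (by omega) (by omega) (by omega),
        card_chain_eq_zero_of_count_lt true (by simp; omega)]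
      simp
    · rw [card_chain_kinkWord_succ (by omega) (by omega),
        ih (i := i) (j := 0) (by omega) (by omega) (by omega),
        card_chain_eq_zero_of_count_lt false (by simp; omega),
        card_chain_eq_zero_of_count_lt false (by simp; omega),
        card_chain_blockWord hn₀ hm₀ (i := i) (j := 0) (by omega) (by omega) (by omega),
        show i = K by omega]
      simp
    · rw [card_chain_kinkWord_succ (by omega) (by omega),
        ih (i := i) (j := j + 1) (by omega) (by omega) (by omega),
        ih (i := i + 1) (j := j) (by omega) (by omega) (by omega),
        card_chain_blockWord hn₀ hm₀ (i := i + 1) (j := j) (by omega) (by omega) (by omega),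
        card_chain_blockWord hn₀ hm₀ (i := i) (j := j + 1) (by omega) (by omega) (by omega),
        Nat.choose_succ_succ' K i]
      ring

theorem saturated_chain_count_general (n m n₁ m₁ N : ℕ) (hn : 2 ≤ n) (hm : 2 ≤ m)
    (hN : N = n₁ + m₁) :
    Nat.card {c : Fin (N + 1) → BW //
        c 0 = List.replicate n true ++ List.replicate m false ∧
        c (Fin.last N) = List.replicate (n₁ + n - 1) true ++ [false, true]
            ++ List.replicate (m₁ + m - 1) false ∧
        ∀ i : Fin N, CoveredBy (c i.castSucc) (c i.succ)}
      * (Nat.factorial n₁ * Nat.factorial m₁)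
    = N * Nat.factorial N := by
  have hfactorial : N.choose n₁ * (n₁ ! * m₁ !) = N ! := by
    rw [← mul_assoc, show m₁ = N - n₁ by omega, Nat.choose_mul_factorial_mul_factorial (by omega)]
  change Nat.card (RelChain CoveredBy (blockWord n m) (kinkWord (n₁ + n - 1) (m₁ + m - 1)) N) * _
    = _
  rw [card_chain_kinkWord hn hm (i := n₁) (j := m₁) (by omega) (by omega) hN.symm, mul_assoc,
    hfactorial]

/-- the dimension count (4.11) of the paper.  For `n, m ≥ 2` and
`N = n₁ + m₁ ≥ 1`, the number of saturated chains in the subword order from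
`+ⁿ −ᵐ` to `+^{n₁+n−1} − + −^{m₁+m−1}` equals `N · N! / (n₁! · m₁!)`; we state it
multiplied out: `(number of chains) · n₁! · m₁! = N · N!`. -/
theorem saturated_chain_count (n m n₁ m₁ N : ℕ) (hn : 2 ≤ n) (hm : 2 ≤ m)
    (hN : N = n₁ + m₁) (hN1 : 1 ≤ N) :
    Nat.card {c : Fin (N + 1) → BW //
        c 0 = List.replicate n true ++ List.replicate m false ∧
        c (Fin.last N) = List.replicate (n₁ + n - 1) true ++ [false, true]
            ++ List.replicate (m₁ + m - 1) false ∧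
        ∀ i : Fin N, CoveredBy (c i.castSucc) (c i.succ)}
      * (Nat.factorial n₁ * Nat.factorial m₁)
    = N * Nat.factorial N :=
  saturated_chain_count_general n m n₁ m₁ N hn hm hN

end Zigzag
end

section
/- Let t be the template (+¹, ∞−, ∞+, −¹, ∞+) (clusters: + with multiplicity 1, − with multiplicity ∞, + with multiplicity ∞, − with multiplicity 1, + with multiplicity ∞) and let t₁ = (∞−, ∞+, −¹, ∞+). Then Z(t) is the disjoint union of Z(t₁) and Z(t)^{+−−} = {a ∈ Z(t) : a ≥ +−−}; that is, Z(t) = Z(t₁) ∪ Z(t)^{+−−} and Z(t₁) ∩ Z(t)^{+−−} = ∅. -/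
/-!
Common definitions: the zigzag graph on binary words, templates and their coideals,
zigzag flanges and sections, the functions `F_λ(u)` and `φ_{t,w}`, and harmonic /
semifinite / indecomposable functions on subgraphs of the zigzag graph.
-/

open scoped ENNReal NNReal

namespace Zigzag

/-- The set of upper neighbours of `a` lying in `S` is finite. -/
lemma upSet_finite (S : Set BW) (a : BW) : {b | b ∈ S ∧ CoveredBy a b}.Finite :=
  (List.finite_length_eq Bool (a.length + 1)).subset (fun _ hb => hb.2.2)

/-- The finset of upper neighbours of `a` inside `S`. -/
noncomputable def upFinset (S : Set BW) (a : BW) : Finset BW :=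
  (upSet_finite S a).toFinset

/-- A `[0,∞]`-valued function is harmonic on `S ⊆ Z` (with the edges induced from the
zigzag graph) if its value at any vertex of `S` equals the sum of its values at the
upper neighbours lying in `S`. -/
def HarmonicOn (S : Set BW) (φ : BW → ℝ≥0∞) : Prop :=
  ∀ a ∈ S, φ a = ∑ b ∈ upFinset S a, φ b

/-- A template: a nonempty sequence of clusters with alternating signs, each cluster
being a sign (`true` = `+`, `false` = `−`) with a multiplicity in `{1,2,…} ∪ {∞}`,
containing at least one infinite cluster. -/
structure Template where
  clusters : List (Bool × ℕ∞)
  ne : clusters ≠ []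
  pos : ∀ c ∈ clusters, c.2 ≠ 0
  alternating : clusters.Chain' fun c d => c.1 ≠ d.1
  hasInf : ∃ c ∈ clusters, c.2 = ⊤

/-- The binary word obtained from a list of clusters by replacing every infinite
multiplicity by `N` (and keeping the finite multiplicities). -/
def clWord (cs : List (Bool × ℕ∞)) (N : ℕ) : BW :=
  (cs.map fun c => List.replicate (if c.2 = ⊤ then N else c.2.toNat) c.1).flatten

/-- The coideal generated by a list of clusters: all binary words that are subwords of
some instantiation. -/
def Zcl (cs : List (Bool × ℕ∞)) : Set BW := {a | ∃ N, a.Sublist (clWord cs N)}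

/-- The coideal `Z(t)` of the zigzag graph attached to a template `t`. -/
def Zt (t : Template) : Set BW := Zcl t.clusters

/-- The cluster in position `i` of `t` is a separating cluster: a one-symbol finite
cluster which is not outermost and whose two neighbours are infinite clusters
(necessarily of the same sign). -/
def Template.isSep (t : Template) (i : ℕ) : Prop :=
  0 < i ∧ i + 1 < t.clusters.length ∧
  (t.clusters.getD i (true, 1)).2 = 1 ∧
  (t.clusters.getD (i - 1) (true, 1)).2 = ⊤ ∧
  (t.clusters.getD (i + 1) (true, 1)).2 = ⊤

/-- A template is finite if all its finite clusters are separating; otherwise it is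
semifinite. -/
def Template.IsFiniteTemplate (t : Template) : Prop :=
  ∀ i < t.clusters.length, (t.clusters.getD i (true, 1)).2 ≠ ⊤ → t.isSep i

/-- The number of infinite clusters of a template. -/
def Template.numInf (t : Template) : ℕ :=
  (t.clusters.filter fun c => decide (c.2 = ⊤)).length

/-- Position `p` of `t` carries a finite non-separating cluster, i.e. a cluster
contributing to the zigzag flange of `t`. -/
def IsFlangePos (t : Template) (p : ℕ) : Prop :=
  p < t.clusters.length ∧ (t.clusters.getD p (true, 1)).2 ≠ ⊤ ∧ ¬t.isSep p

/-- Decrease by one the multiplicity of the cluster in position `p`. -/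
def decAt (cs : List (Bool × ℕ∞)) (p : ℕ) : List (Bool × ℕ∞) :=
  cs.set p ((cs.getD p (true, 1)).1, (cs.getD p (true, 1)).2 - 1)

/-- The coideal `J(t)`: the union of the coideals `Z(r)` over all `r` obtained from `t`
by removing a single symbol from a cluster corresponding to a block of a binary word
from the zigzag flange of `t` (no merging of clusters is needed to generate `Z(r)`). -/
def Jt (t : Template) : Set BW :=
  {a | ∃ p, IsFlangePos t p ∧ a ∈ Zcl (decAt t.clusters p)}

/-- The canonical splitting of a template `t` into its zigzag flange
`fl(t) = (a₀, …, a_k)` (given by the lists `A 0, …, A k` of clusters, each consisting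
of finite non-separating clusters of `t`) and its sections `t₁, …, t_k` (the maximal
groups of consecutive clusters forming finite templates), so that
`t = (a₀, t₁, a₁, …, a_{k−1}, t_k, a_k)`.  The two `interior` conditions express the
maximality of the decomposition. -/
structure SectionData (t : Template) where
  k : ℕ
  A : Fin (k + 1) → List (Bool × ℕ∞)
  T : Fin k → Template
  concat : t.clusters
      = A 0 ++ (List.ofFn fun i : Fin k => (T i).clusters ++ A i.succ).flatten
  finA : ∀ j, ∀ c ∈ A j, c.2 ≠ ⊤
  secFin : ∀ i, (T i).IsFiniteTemplate
  interior_ne : ∀ j : Fin (k + 1), (j : ℕ) ≠ 0 → (j : ℕ) ≠ k → A j ≠ []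
  interior_not_sep : ∀ j : Fin (k + 1), (j : ℕ) ≠ 0 → (j : ℕ) ≠ k →
      ∀ s : Bool, A j ≠ [(s, 1)]

/-- The binary word corresponding to a list of finite clusters (a flange word). -/
def flangeWord (cs : List (Bool × ℕ∞)) : BW :=
  (cs.map fun c => List.replicate c.2.toNat c.1).flatten

/-- `a₀ ⊔ ℓ 1 ⊔ a₁ ⊔ … ⊔ ℓ k ⊔ a_k` (empty flange words disappear). -/
def assemble {t : Template} (D : SectionData t) (ℓ : Fin D.k → BW) : BW :=
  flangeWord (D.A 0) ++ (List.ofFn fun i : Fin D.k => ℓ i ++ flangeWord (D.A i.succ)).flatten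

/-- `ℓ` is a decomposition of `a` along the sections of `t`:
`bw(a) = a₀ ⊔ bw(ℓ 1) ⊔ a₁ ⊔ … ⊔ bw(ℓ k) ⊔ a_k` with `ℓ i ∈ Z(tᵢ)`. -/
def decompOf {t : Template} (D : SectionData t) (a : BW) (ℓ : Fin D.k → BW) : Prop :=
  (∀ i, ℓ i ∈ Zt (D.T i)) ∧ a = assemble D ℓ

/-- The signs of the infinite clusters of a list of clusters, in order. -/
def infSigns (cs : List (Bool × ℕ∞)) : List Bool :=
  (cs.filter fun c => decide (c.2 = ⊤)).map Prod.fst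

/-- The number of weights consumed by the sections preceding the `i`-th one. -/
def secOffset {t : Template} (D : SectionData t) (i : Fin D.k) : ℕ :=
  ∑ i' ∈ Finset.univ.filter (· < i), (infSigns (D.T i').clusters).length

/-- The part `vᵢ` of the tuple of weights `w` corresponding to the infinite clusters of
the `i`-th section, as a sequence of (sign, weight) pairs. -/
def vD {t : Template} (D : SectionData t) (w : List ℝ) (i : Fin D.k) : List (Bool × ℝ) :=
  (infSigns (D.T i).clusters).zip (w.drop (secOffset D i))

/-- `F_λ(u)` for a finite sequence `u` of (sign, length) pairs and a zigzag `λ`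
(encoded by its binary word `a`, so that `λ` has `a.length + 1` boxes): the sum, over
all decompositions of `λ` into `u.length` consecutive (possibly empty) zigzags
`λ(1), …, λ(m)` with `λ(i)` a row when the `i`-th sign is `+` and a column when it is
`−`, of `u₁ ^ |λ(1)| ⋯ u_m ^ |λ(m)|`.  A decomposition is recorded by the tuple `c` of
the numbers of boxes of the pieces; the row/column constraint says that the letters of
`a` strictly inside the `i`-th group of boxes all equal the `i`-th sign. -/
noncomputable def Fword (u : List (Bool × ℝ)) (a : BW) : ℝ :=
  ∑ c ∈ (Finset.Nat.antidiagonalTuple u.length (a.length + 1)).filter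
      (fun c => ∀ i : Fin u.length,
        (a.drop (∑ i' ∈ Finset.univ.filter (· < i), c i')).take (c i - 1)
          = List.replicate (c i - 1) (u.get i).1),
    ∏ i, (u.get i).2 ^ c i

open Classical in
/-- The function `φ_{t,w}` attached to a semifinite zigzag growth model `(t, w)`:
it equals `+∞` on `J(t)`, and on `Z(t) ∖ J(t)` it equals
`F_{λ^{(1)}}(v₁) ⋯ F_{λ^{(k)}}(v_k)`, where `(λ^{(1)}, …, λ^{(k)})` is the (unique)
decomposition of `λ` along the sections of `t` (it is `0` off `Z(t)`). -/
noncomputable def phiTW (t : Template) (D : SectionData t) (w : List ℝ) (a : BW) : ℝ≥0∞ :=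
  if a ∉ Zt t then 0
  else if a ∈ Jt t then ⊤
  else if h : ∃ ℓ : Fin D.k → BW, decompOf D a ℓ then
    ENNReal.ofReal (∏ i, Fword (vD D w i) (h.choose i))
  else 0

section Kcone

/-- The relation `λ = ∑_{μ : λ ↗ μ} μ` (within `S`) as an element of the free module. -/
noncomputable def relOf (S : Set BW) (a : BW) : BW →₀ ℝ :=
  Finsupp.single a 1 - ∑ b ∈ upFinset S a, Finsupp.single b 1

/-- The submodule of relations defining `K(S)`. -/
noncomputable def Krel (S : Set BW) : Submodule ℝ (BW →₀ ℝ) :=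
  Submodule.span ℝ {f | ∃ a ∈ S, f = relOf S a}

/-- The class of `f` in `K(S) = (⊕_{λ ∈ S} ℝ λ) ⧸ (relations)`. -/
noncomputable def kmk (S : Set BW) (f : BW →₀ ℝ) : (BW →₀ ℝ) ⧸ Krel S :=
  Submodule.Quotient.mk f

/-- Nonnegative formal combinations of vertices of `S`. -/
def NonnegOn (S : Set BW) (f : BW →₀ ℝ) : Prop :=
  (∀ x, 0 ≤ f x) ∧ ∀ x ∈ f.support, x ∈ S

/-- The cone `K⁺(S)` spanned by the vertices of `S` in `K(S)`. -/
noncomputable def Kpos (S : Set BW) : Set ((BW →₀ ℝ) ⧸ Krel S) :=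
  kmk S '' {f | NonnegOn S f}

/-- The order defined by the cone `K⁺(S)`: `x ≤_K y` iff `y − x ∈ K⁺(S)`. -/
def leK (S : Set BW) (x y : (BW →₀ ℝ) ⧸ Krel S) : Prop := y - x ∈ Kpos S

/-- The value of (the canonical extension of) `φ` at a nonnegative combination of
vertices. -/
noncomputable def phiHat (φ : BW → ℝ≥0∞) (f : BW →₀ ℝ) : ℝ≥0∞ :=
  ∑ x ∈ f.support, ENNReal.ofReal (f x) * φ x

/-- `φ` is finite on `S`. -/
def FiniteOn (S : Set BW) (φ : BW → ℝ≥0∞) : Prop := ∀ a ∈ S, φ a ≠ ⊤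

/-- `φ` is a semifinite function on (the graph) `S`: it is not everywhere finite, and
its value at any element `a` of the cone `K⁺` is the supremum of its values at the
elements `b ≤_K a` of the cone where it is finite. -/
def SemifiniteOn (S : Set BW) (φ : BW → ℝ≥0∞) : Prop :=
  (∃ a ∈ S, φ a = ⊤) ∧
  ∀ f : BW →₀ ℝ, NonnegOn S f →
    phiHat φ f =
      ⨆ g ∈ {g : BW →₀ ℝ |
        NonnegOn S g ∧ leK S (kmk S g) (kmk S f) ∧ phiHat φ g ≠ ⊤}, phiHat φ g

/-- A semifinite harmonic function `φ` on `S` is indecomposable if any finite or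
semifinite harmonic function `φ′ ≤ φ` on `S` which does not vanish identically on the
finiteness ideal of `φ` is a constant multiple of `φ` on that ideal. -/
def IndecSemifiniteOn (S : Set BW) (φ : BW → ℝ≥0∞) : Prop :=
  ∀ φ' : BW → ℝ≥0∞, HarmonicOn S φ' →
    (FiniteOn S φ' ∨ SemifiniteOn S φ') →
    (∀ a ∈ S, φ' a ≤ φ a) →
    (∃ a ∈ S, φ a ≠ ⊤ ∧ φ' a ≠ 0) →
    ∃ c : ℝ≥0, ∀ a ∈ S, φ a ≠ ⊤ → φ' a = (c : ℝ≥0∞) * φ a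

end Kcone

end Zigzag

namespace Zigzag

/-- The template `t = (+¹, ∞−, ∞+, −¹, ∞+)` of Example 3.7 of the paper. -/
def exTemplate : Template where
  clusters := [(true, 1), (false, ⊤), (true, ⊤), (false, 1), (true, ⊤)]
  ne := by decide
  pos := by decide
  alternating := by simp [List.Chain', List.isChain_cons]
  hasInf := by decide

/-- The template `t₁ = (∞−, ∞+, −¹, ∞+)`, the unique section of `exTemplate`. -/
def exTemplate₁ : Template where
  clusters := [(false, ⊤), (true, ⊤), (false, 1), (true, ⊤)]
  ne := by decide
  pos := by decide
  alternating := by simp [List.Chain', List.isChain_cons]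
  hasInf := by decide

/-!
Since `t[N] = + t₁[N]`, a word of `Z(t)` either lies below `t₁[N]` or is `+r` with `r ≤ t₁[N]`.
In `t₁[N] = −ᴺ +ᴺ − +ᴺ` every `+` is followed by a single `−`, so no word of `Z(t₁)` contains
`+−−`; and if `+r` avoids `+−−`, then it has at most one `−`, hence lies below
`+ⁿ − +ⁿ ≤ t₁[n]` for `n` its length.
-/

lemma eq_replicate_of_count_not_eq_zero {s : Bool} {l : BW} (h : l.count (!s) = 0) :
    l = List.replicate l.length s := by
  refine List.eq_replicate_iff.2 ⟨rfl, fun x hx => ?_⟩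
  have hxs : x ≠ !s := fun hx' => List.count_eq_zero.1 h (hx' ▸ hx)
  cases x <;> cases s <;> simp_all

lemma sublist_replicate_append_cons_replicate_of_count_not_le_one {s : Bool} {l : BW} {n : ℕ}
    (hcount : l.count (!s) ≤ 1) (hlen : l.length ≤ n) :
    l.Sublist (List.replicate n s ++ (!s) :: List.replicate n s) := by
  by_cases hmem : (!s) ∈ l
  · obtain ⟨l₁, l₂, rfl⟩ := List.append_of_mem hmem
    simp only [List.count_append, List.count_cons_self] at hcount
    simp only [List.length_append, List.length_cons] at hlen
    rw [eq_replicate_of_count_not_eq_zero (s := s) (l := l₁) (by omega),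
      eq_replicate_of_count_not_eq_zero (s := s) (l := l₂) (by omega)]
    exact ((List.replicate_sublist_replicate _).2 (by omega)).append
      (List.cons_sublist_cons.2 ((List.replicate_sublist_replicate _).2 (by omega)))
  · rw [eq_replicate_of_count_not_eq_zero (List.count_eq_zero.2 hmem)]
    exact ((List.replicate_sublist_replicate _).2 hlen).trans (List.sublist_append_left _ _)

lemma cons_sublist_replicate_append_iff {a b : Bool} (hab : a ≠ b) {l u : BW} {n : ℕ} :
    (a :: l).Sublist (List.replicate n b ++ u) ↔ (a :: l).Sublist u := by
  induction n with
  | zero => simp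
  | succ n ih => simp [List.replicate_succ, List.sublist_cons_iff, hab, ih]

lemma clWord_exTemplate₁ (N : ℕ) : clWord exTemplate₁.clusters N =
    List.replicate N false ++ (List.replicate N true ++ false :: List.replicate N true) := by
  simp [clWord, exTemplate₁]

lemma clWord_exTemplate (N : ℕ) :
    clWord exTemplate.clusters N = true :: clWord exTemplate₁.clusters N := by
  simp [clWord, exTemplate, exTemplate₁]

lemma Zt_exTemplate₁_subset : Zt exTemplate₁ ⊆ Zt exTemplate := fun _ ⟨N, hN⟩ =>
  ⟨N, clWord_exTemplate N ▸ hN.cons true⟩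

lemma mem_Zt_exTemplate₁_of_count_false_le_one {a : BW} (h : a.count false ≤ 1) :
    a ∈ Zt exTemplate₁ :=
  ⟨a.length,
    (sublist_replicate_append_cons_replicate_of_count_not_le_one (s := true) h le_rfl).trans
      (clWord_exTemplate₁ _ ▸ List.sublist_append_right _ _)⟩

lemma not_sublist_of_mem_Zt_exTemplate₁ {a : BW} (ha : a ∈ Zt exTemplate₁) :
    ¬ [true, false, false].Sublist a := by
  intro h
  obtain ⟨N, hN⟩ := ha
  have h' := (cons_sublist_replicate_append_iff (by decide)).1
    (clWord_exTemplate₁ N ▸ h.trans hN)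
  simpa [List.count_replicate] using h'.count_le false

lemma mem_Zt_exTemplate₁_of_not_sublist {a : BW} (ha : a ∈ Zt exTemplate)
    (h : ¬ [true, false, false].Sublist a) : a ∈ Zt exTemplate₁ := by
  obtain ⟨N, hN⟩ := ha
  rcases List.sublist_cons_iff.1 (clWord_exTemplate N ▸ hN) with hN₁ | ⟨r, rfl, -⟩
  · exact ⟨N, hN₁⟩
  · have hr : ¬ (List.replicate 2 false).Sublist r := fun hr => h (hr.cons_cons true)
    refine mem_Zt_exTemplate₁_of_count_false_le_one ?_
    rw [List.replicate_sublist_iff] at hr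
    simpa using hr

/-- Example 3.7 of the paper.  For
`t = (+¹, ∞−, ∞+, −¹, ∞+)` and `t₁ = (∞−, ∞+, −¹, ∞+)` one has the disjoint
decomposition `Z(t) = Z(t₁) ⊔ Z(t)^{+−−}`. -/
theorem example_Zt_decomposition :
    Zt exTemplate = Zt exTemplate₁ ∪
        {a ∈ Zt exTemplate | [true, false, false].Sublist a} ∧
      Zt exTemplate₁ ∩ {a ∈ Zt exTemplate | [true, false, false].Sublist a} = ∅ := by
  refine ⟨Set.Subset.antisymm (fun a ha => ?_) ?_, ?_⟩
  · by_cases h : [true, false, false].Sublist a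
    · exact Or.inr ⟨ha, h⟩
    · exact Or.inl (mem_Zt_exTemplate₁_of_not_sublist ha h)
  · exact Set.union_subset Zt_exTemplate₁_subset (Set.sep_subset _ _)
  · exact Set.eq_empty_iff_forall_notMem.2 fun a ⟨ha₁, _, h⟩ =>
      not_sublist_of_mem_Zt_exTemplate₁ ha₁ h

end Zigzag
end
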